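/- arXiv:0801.2089 — 2 statements merged into one kernel-verified Lean document; each statement's English description precedes it below -/
import Mathlib

section
/- Let Δ, N be positive integers, p an odd prime with p ∤ ΔN, a ∈ ℤ with p ∣ a²ΔN + 1, and let c ∈ ℤ_p satisfy c² = −ΔN and a·c + 1 ∈ p·ℤ_p. Then the ℚ_p-linear map φ : ℍ[ℚ_p,−ΔN,p] → M₂(ℚ_p) sending α + β·i + γ·j + δ·k to !![α − βc, γ − δc; γp + δpc, α + βc] is a ℚ_p-algebra isomorphism, and the ℤ_p-submodule of M₂(ℚ_p) spanned by φ(e₁), φ(e₂), φ(e₃), φ(e₄) equals M₂(ℤ_p). -/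
open Quaternion

set_option maxHeartbeats 2000000

/-- The `ℚ_p`-linear map `φ : ℍ[ℚ_p, -ΔN, p] → M₂(ℚ_p)` sending `α + βi + γj + δk` to
`!![α − βc, γ − δc; γp + δpc, α + βc]`, where `c² = −ΔN` in `ℤ_p`. -/
noncomputable def phi (p : ℕ) [Fact p.Prime] (Δ N : ℕ) (c : ℤ_[p]) :
    ℍ[ℚ_[p], -((Δ : ℚ_[p]) * N), (p : ℚ_[p])] → Matrix (Fin 2) (Fin 2) ℚ_[p] := fun h =>
  !![h.re - h.imI * (c : ℚ_[p]), h.imJ - h.imK * (c : ℚ_[p]);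
     h.imJ * (p : ℚ_[p]) + h.imK * (p : ℚ_[p]) * (c : ℚ_[p]), h.re + h.imI * (c : ℚ_[p])]

lemma aux_mul {K : Type} [Field K] {c₁ c₂ : K} (s : K) (h1 : c₁ = s*s)
    (g h : ℍ[K,c₁,c₂]) :
    !![(g*h).re - (g*h).imI * s, (g*h).imJ - (g*h).imK * s;
       (g*h).imJ * c₂ + (g*h).imK * c₂ * s, (g*h).re + (g*h).imI * s] =
    !![g.re - g.imI * s, g.imJ - g.imK * s;
       g.imJ * c₂ + g.imK * c₂ * s, g.re + g.imI * s] *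
    !![h.re - h.imI * s, h.imJ - h.imK * s;
       h.imJ * c₂ + h.imK * c₂ * s, h.re + h.imI * s] := by
  subst h1
  rw [Matrix.mul_fin_two]
  ext i j
  fin_cases i <;> fin_cases j <;>
    simp [QuaternionAlgebra.re_mul, QuaternionAlgebra.imI_mul,
      QuaternionAlgebra.imJ_mul, QuaternionAlgebra.imK_mul] <;> ring

lemma phi_mk {p : ℕ} [Fact p.Prime] {Δ N : ℕ} {c : ℤ_[p]} (α β γ δ : ℚ_[p]) :
    phi p Δ N c ⟨α, β, γ, δ⟩ =
    !![α - β * (c : ℚ_[p]), γ - δ * (c : ℚ_[p]);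
       γ * (p : ℚ_[p]) + δ * (p : ℚ_[p]) * (c : ℚ_[p]), α + β * (c : ℚ_[p])] := rfl

lemma zsmul_coe {p : ℕ} [Fact p.Prime] (z : ℤ_[p]) (x : ℚ_[p]) : z • x = (z:ℚ_[p]) * x := by
  rw [Algebra.smul_def]; rfl

def intEntries (p : ℕ) [Fact p.Prime] : Submodule ℤ_[p] (Matrix (Fin 2) (Fin 2) ℚ_[p]) where
  carrier := {γ | ∀ i j : Fin 2, ∃ z : ℤ_[p], γ i j = (z : ℚ_[p])}
  zero_mem' := fun i j => ⟨0, by simp⟩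
  add_mem' := by
    rintro x y hx hy i j
    obtain ⟨u, hu⟩ := hx i j
    obtain ⟨v, hv⟩ := hy i j
    exact ⟨u + v, by rw [Matrix.add_apply, hu, hv]; push_cast; ring⟩
  smul_mem' := by
    rintro r x hx i j
    obtain ⟨u, hu⟩ := hx i j
    exact ⟨r * u, by rw [Matrix.smul_apply, hu, zsmul_coe]; push_cast; ring⟩

-- the pure matrix span lemma
lemma span_matrices (p : ℕ) [Fact p.Prime]
    (cq : ℚ_[p]) (half d t : ℤ_[p]) (s : ℚ_[p])
    (hhalfQ : (half : ℚ_[p]) = 1/2) (hdQ : (d : ℚ_[p]) * cq = 1)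
    (hsQ : s = (p : ℚ_[p]) * t + cq + cq)
    (hhalfc : ∃ z : ℤ_[p], -(cq/2) = (z : ℚ_[p]))
    (hhalfc' : ∃ z : ℤ_[p], (p : ℚ_[p]) * cq / 2 = (z : ℚ_[p]))
    (hcz : ∃ z : ℤ_[p], cq / 2 = (z : ℚ_[p]))
    (hhp : ∃ z : ℤ_[p], (p : ℚ_[p]) / 2 = (z : ℚ_[p]))
    (hsz : ∃ z : ℤ_[p], s = (z : ℚ_[p])) :
    (Submodule.span ℤ_[p]
        {(!![1, 0; 0, 1] : Matrix (Fin 2) (Fin 2) ℚ_[p]),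
         !![1/2, 1/2; (p : ℚ_[p])/2, 1/2],
         !![-(cq/2), -(cq/2); (p : ℚ_[p]) * cq / 2, cq/2],
         !![0, (t : ℚ_[p]); s, 0]} :
      Set (Matrix (Fin 2) (Fin 2) ℚ_[p])) =
      {γ | ∀ i j : Fin 2, ∃ z : ℤ_[p], γ i j = (z : ℚ_[p])} := by
  set S := Submodule.span ℤ_[p]
      ({!![1, 0; 0, 1], !![1/2, 1/2; (p : ℚ_[p])/2, 1/2],
        !![-(cq/2), -(cq/2); (p : ℚ_[p]) * cq / 2, cq/2],
        !![0, (t : ℚ_[p]); s, 0]} : Set (Matrix (Fin 2) (Fin 2) ℚ_[p])) with hS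
  have hG1S : (!![1, 0; 0, 1] : Matrix (Fin 2) (Fin 2) ℚ_[p]) ∈ S :=
    Submodule.subset_span (by left; rfl)
  have hG2S : (!![1/2, 1/2; (p : ℚ_[p])/2, 1/2] : Matrix (Fin 2) (Fin 2) ℚ_[p]) ∈ S :=
    Submodule.subset_span (by right; left; rfl)
  have hG3S : (!![-(cq/2), -(cq/2); (p : ℚ_[p]) * cq / 2, cq/2] : Matrix (Fin 2) (Fin 2) ℚ_[p]) ∈ S :=
    Submodule.subset_span (by right; right; left; rfl)
  have hG4S : (!![0, (t : ℚ_[p]); s, 0] : Matrix (Fin 2) (Fin 2) ℚ_[p]) ∈ S :=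
    Submodule.subset_span (by right; right; right; rfl)
  have hcq0 : cq ≠ 0 := by
    intro h; rw [h, mul_zero] at hdQ; exact zero_ne_one hdQ
  have hA : !![1/2, 1/2; (p : ℚ_[p])/2, 1/2] + d • !![-(cq/2), -(cq/2); (p : ℚ_[p]) * cq / 2, cq/2]
      = !![0, 0; (p:ℚ_[p]), 1] := by
    ext i j
    fin_cases i <;> fin_cases j <;>
      simp [Matrix.add_apply, Matrix.smul_apply, zsmul_coe] <;>
      first
      | linear_combination (-1/2 : ℚ_[p]) * hdQ
      | linear_combination ((p:ℚ_[p])/2) * hdQ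
      | linear_combination (1/2 : ℚ_[p]) * hdQ
      | linear_combination (-(p:ℚ_[p])/2) * hdQ
      | ring
  have hAS : (!![0, 0; (p:ℚ_[p]), 1]) ∈ S := hA ▸ S.add_mem hG2S (S.smul_mem d hG3S)
  have hB : !![1/2, 1/2; (p : ℚ_[p])/2, 1/2] - d • !![-(cq/2), -(cq/2); (p : ℚ_[p]) * cq / 2, cq/2]
      = !![1, 1; 0, 0] := by
    ext i j
    fin_cases i <;> fin_cases j <;>
      simp [Matrix.sub_apply, Matrix.smul_apply, zsmul_coe] <;>
      first
      | linear_combination (-1/2 : ℚ_[p]) * hdQ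
      | linear_combination ((p:ℚ_[p])/2) * hdQ
      | linear_combination (1/2 : ℚ_[p]) * hdQ
      | linear_combination (-(p:ℚ_[p])/2) * hdQ
      | ring
  have hBS : (!![(1:ℚ_[p]), 1; 0, 0]) ∈ S := hB ▸ S.sub_mem hG2S (S.smul_mem d hG3S)
  have hC : (!![0, 0; (p:ℚ_[p]), 1]) + !![1, 1; 0, 0] - !![1, 0; 0, 1] = !![0, 1; (p:ℚ_[p]), 0] := by
    ext i j
    fin_cases i <;> fin_cases j <;> simp
  have hCS : (!![0, 1; (p:ℚ_[p]), 0]) ∈ S := hC ▸ S.sub_mem (S.add_mem hAS hBS) hG1S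
  have hE21 : (half * d) • ((!![0, (t : ℚ_[p]); s, 0]) - t • !![0, 1; (p:ℚ_[p]), 0])
      = !![0, 0; (1:ℚ_[p]), 0] := by
    ext i j
    fin_cases i <;> fin_cases j <;>
      simp [Matrix.sub_apply, Matrix.smul_apply, zsmul_coe, hsQ] <;>
      push_cast [hhalfQ] <;>
      first
      | linear_combination hdQ
      | ring
  have hE21S : (!![0, 0; (1:ℚ_[p]), 0]) ∈ S :=
    hE21 ▸ S.smul_mem _ (S.sub_mem hG4S (S.smul_mem t hCS))
  have hE12 : (!![0, 1; (p:ℚ_[p]), 0]) - (p : ℤ_[p]) • !![0, 0; (1:ℚ_[p]), 0] = !![0, 1; 0, 0] := by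
    ext i j
    fin_cases i <;> fin_cases j <;>
      simp [Matrix.sub_apply, Matrix.smul_apply, zsmul_coe] <;> push_cast <;> ring
  have hE12S : (!![(0:ℚ_[p]), 1; 0, 0]) ∈ S :=
    hE12 ▸ S.sub_mem hCS (S.smul_mem _ hE21S)
  have hE11 : (!![(1:ℚ_[p]), 1; 0, 0]) - !![0, 1; 0, 0] = !![1, 0; 0, 0] := by
    ext i j
    fin_cases i <;> fin_cases j <;> simp
  have hE11S : (!![(1:ℚ_[p]), 0; 0, 0]) ∈ S := hE11 ▸ S.sub_mem hBS hE12S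
  have hE22 : (!![1, 0; 0, 1]) - !![(1:ℚ_[p]), 0; 0, 0] = !![0, 0; 0, 1] := by
    ext i j
    fin_cases i <;> fin_cases j <;> simp
  have hE22S : (!![(0:ℚ_[p]), 0; 0, 1]) ∈ S := hE22 ▸ S.sub_mem hG1S hE11S
  have hmain : S = intEntries p := by
    apply le_antisymm
    · rw [hS]
      apply Submodule.span_le.mpr
      rintro x (rfl | rfl | rfl | rfl) <;> intro i j <;> fin_cases i <;> fin_cases j
      · exact ⟨1, by simp⟩
      · exact ⟨0, by simp⟩
      · exact ⟨0, by simp⟩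
      · exact ⟨1, by simp⟩
      · exact ⟨half, by simp [hhalfQ]⟩
      · exact ⟨half, by simp [hhalfQ]⟩
      · simpa using hhp
      · exact ⟨half, by simp [hhalfQ]⟩
      · simpa using hhalfc
      · simpa using hhalfc
      · simpa using hhalfc'
      · simpa using hcz
      · exact ⟨0, by simp⟩
      · exact ⟨t, by simp⟩
      · simpa using hsz
      · exact ⟨0, by simp⟩
    · intro γ hγ
      obtain ⟨z00, h00⟩ := hγ 0 0
      obtain ⟨z01, h01⟩ := hγ 0 1
      obtain ⟨z10, h10⟩ := hγ 1 0
      obtain ⟨z11, h11⟩ := hγ 1 1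
      have hdec : γ = z00 • !![(1:ℚ_[p]), 0; 0, 0] + z01 • !![0, 1; 0, 0]
          + z10 • !![0, 0; 1, 0] + z11 • !![0, 0; 0, 1] := by
        ext i j
        fin_cases i <;> fin_cases j <;>
          simp [Matrix.add_apply, Matrix.smul_apply, zsmul_coe, h00, h01, h10, h11]
      rw [hdec]
      exact S.add_mem (S.add_mem (S.add_mem (S.smul_mem _ hE11S) (S.smul_mem _ hE12S))
        (S.smul_mem _ hE21S)) (S.smul_mem _ hE22S)
  rw [hmain]
  rfl

/-- At the prime `p`, with `c ∈ ℤ_p` satisfying `c² = −ΔN` and `ac + 1 ∈ pℤ_p`, the map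
`φ` is a `ℚ_p`-algebra isomorphism, and the `ℤ_p`-span of the images of the Hashimoto
basis `e₁, e₂, e₃, e₄` is all of `M₂(ℤ_p)`. -/
theorem stmt_7 (Δ N : ℕ) (hΔ : 0 < Δ) (hN : 0 < N)
    (p : ℕ) [Fact p.Prime] (hp2 : p ≠ 2) (hpΔN : ¬ p ∣ Δ * N)
    (a : ℤ) (ha : (p : ℤ) ∣ a ^ 2 * Δ * N + 1)
    (c : ℤ_[p]) (hc : c ^ 2 = -((Δ : ℤ_[p]) * N)) (hac : (p : ℤ_[p]) ∣ (a : ℤ_[p]) * c + 1) :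
    Function.Bijective (phi p Δ N c) ∧
    (∀ g h, phi p Δ N c (g * h) = phi p Δ N c g * phi p Δ N c h) ∧
    (∀ g h, phi p Δ N c (g + h) = phi p Δ N c g + phi p Δ N c h) ∧
    (∀ (r : ℚ_[p]) g, phi p Δ N c (r • g) = r • phi p Δ N c g) ∧
    phi p Δ N c 1 = 1 ∧
    (Submodule.span ℤ_[p]
        {phi p Δ N c 1,
         phi p Δ N c ⟨1/2, 0, 1/2, 0⟩,
         phi p Δ N c ⟨0, 1/2, 0, 1/2⟩,
         phi p Δ N c ⟨0, 0, (a : ℚ_[p]) * Δ * N / p, 1 / (p : ℚ_[p])⟩} :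
      Set (Matrix (Fin 2) (Fin 2) ℚ_[p])) =
      {γ | ∀ i j : Fin 2, ∃ z : ℤ_[p], γ i j = (z : ℚ_[p])} := by
  have hp0 : (p:ℚ_[p]) ≠ 0 := Nat.cast_ne_zero.mpr (Fact.out (p := p.Prime)).ne_zero
  have hcc : (c:ℚ_[p]) * c = -((Δ : ℚ_[p]) * N) := by
    have h := congrArg (fun z : ℤ_[p] => (z : ℚ_[p])) hc
    push_cast at h
    linear_combination h
  have hΔN0 : ((Δ:ℚ_[p]) * N) ≠ 0 :=
    mul_ne_zero (Nat.cast_ne_zero.mpr hΔ.ne') (Nat.cast_ne_zero.mpr hN.ne')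
  have hc0 : (c:ℚ_[p]) ≠ 0 := by
    intro h; rw [h, mul_zero] at hcc; exact hΔN0 (by linear_combination hcc)
  -- half, the inverse of 2
  obtain ⟨half, hhalf⟩ : ∃ h : ℤ_[p], 2 * h = 1 := by
    have h2 : IsUnit (2 : ℤ_[p]) := by
      rw [PadicInt.isUnit_iff]
      have hle : ‖(2 : ℤ_[p])‖ ≤ 1 := PadicInt.norm_le_one _
      have hnd : ¬ ((p:ℤ) ∣ (2:ℤ)) := by
        intro h
        have h' : p ∣ 2 := by exact_mod_cast h
        exact hp2 ((Nat.prime_dvd_prime_iff_eq Fact.out Nat.prime_two).mp h')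
      have := (PadicInt.norm_int_lt_one_iff_dvd (2:ℤ)).not.mpr hnd
      push_cast at this
      exact le_antisymm hle (not_lt.mp this)
    obtain ⟨u, hu⟩ := h2
    exact ⟨↑u⁻¹, by rw [← hu]; exact_mod_cast u.mul_inv⟩
  -- d, the inverse of c
  obtain ⟨d, hdc⟩ : ∃ d : ℤ_[p], c * d = 1 := by
    have hΔN : ‖((Δ : ℤ_[p]) * N)‖ = 1 := by
      have hle : ‖((Δ : ℤ_[p]) * N)‖ ≤ 1 := PadicInt.norm_le_one _
      have hnd : ¬ ((p:ℤ) ∣ ((Δ * N : ℕ) : ℤ)) := by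
        rw [Int.natCast_dvd_natCast]; exact hpΔN
      have := (PadicInt.norm_int_lt_one_iff_dvd ((Δ*N : ℕ) : ℤ)).not.mpr hnd
      push_cast at this
      exact le_antisymm hle (not_lt.mp this)
    have hcu : IsUnit c := by
      rw [PadicInt.isUnit_iff]
      have h1 : ‖c‖ * ‖c‖ = 1 := by
        have : ‖c ^ 2‖ = 1 := by rw [hc, norm_neg]; exact hΔN
        rwa [sq, norm_mul] at this
      nlinarith [norm_nonneg c]
    obtain ⟨u, hu⟩ := hcu
    exact ⟨↑u⁻¹, by rw [← hu]; exact_mod_cast u.mul_inv⟩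
  have hdcQ : (c : ℚ_[p]) * d = 1 := by exact_mod_cast congrArg (fun z : ℤ_[p] => (z : ℚ_[p])) hdc
  have hhalfQ : (half : ℚ_[p]) = 1/2 := by
    have h : ((2 : ℤ_[p]) : ℚ_[p]) * half = 1 := by
      exact_mod_cast congrArg (fun z : ℤ_[p] => (z : ℚ_[p])) hhalf
    have h2 : ((2 : ℤ_[p]) : ℚ_[p]) = 2 := by norm_cast
    rw [h2] at h
    field_simp
    linear_combination h
  obtain ⟨m, hm⟩ := hac
  obtain ⟨t, hpt⟩ : ∃ t : ℤ_[p], (p : ℤ_[p]) * t = (a : ℤ_[p]) * ((Δ : ℤ_[p]) * N) - c := by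
    refine ⟨d * ((Δ : ℤ_[p]) * N) * m, ?_⟩
    have h1 : c * ((a : ℤ_[p]) * ((Δ : ℤ_[p]) * N) - c) = ((Δ : ℤ_[p]) * N) * ((a : ℤ_[p]) * c + 1) := by
      linear_combination -hc
    calc (p : ℤ_[p]) * (d * ((Δ : ℤ_[p]) * N) * m)
        = d * (((Δ : ℤ_[p]) * N) * ((p : ℤ_[p]) * m)) := by ring
    _ = d * (((Δ : ℤ_[p]) * N) * ((a : ℤ_[p]) * c + 1)) := by rw [← hm]
    _ = (c * d) * ((a : ℤ_[p]) * ((Δ : ℤ_[p]) * N) - c) := by rw [← h1]; ring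
    _ = _ := by rw [hdc]; ring
  have hptQ : (p : ℚ_[p]) * t = (a : ℚ_[p]) * ((Δ : ℚ_[p]) * N) - c := by
    exact_mod_cast congrArg (fun z : ℤ_[p] => (z : ℚ_[p])) hpt
  refine ⟨?_, ?_, ?_, ?_, ?_, ?_⟩
  · -- bijectivity
    rw [Function.bijective_iff_has_inverse]
    refine ⟨fun M => ⟨(M 0 0 + M 1 1)/2, (M 1 1 - M 0 0)/(2*c),
      (M 0 1 + M 1 0 / p)/2, (M 1 0 / p - M 0 1)/(2*c)⟩, ?_, ?_⟩
    · intro g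
      ext <;> simp [phi] <;> field_simp <;> ring
    · intro M
      ext i j
      fin_cases i <;> fin_cases j <;> simp [phi] <;> field_simp <;> ring
  · -- multiplicativity
    intro g h
    exact aux_mul (c:ℚ_[p]) (by linear_combination -hcc) g h
  · -- additivity
    intro g h
    ext i j
    fin_cases i <;> fin_cases j <;> simp [phi] <;> ring
  · -- scalar multiplication
    intro r g
    ext i j
    fin_cases i <;> fin_cases j <;> simp [phi] <;> ring
  · -- phi 1 = 1
    ext i j
    rw [Matrix.one_fin_two]
    fin_cases i <;> fin_cases j <;> simp [phi]
  · -- the span computation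
    have hg1 : phi p Δ N c 1 = !![1, 0; 0, 1] := by
      ext i j
      fin_cases i <;> fin_cases j <;> simp [phi]
    have hg2 : phi p Δ N c ⟨1/2, 0, 1/2, 0⟩ = !![1/2, 1/2; (p : ℚ_[p])/2, 1/2] := by
      rw [phi_mk]
      ext i j
      fin_cases i <;> fin_cases j <;> simp <;> ring
    have hg3 : phi p Δ N c ⟨0, 1/2, 0, 1/2⟩
        = !![-((c : ℚ_[p])/2), -((c : ℚ_[p])/2); (p : ℚ_[p]) * c / 2, (c : ℚ_[p])/2] := by
      rw [phi_mk]
      ext i j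
      fin_cases i <;> fin_cases j <;> simp <;> ring
    have hg4 : phi p Δ N c ⟨0, 0, (a : ℚ_[p]) * Δ * N / p, 1 / (p : ℚ_[p])⟩
        = !![0, (t : ℚ_[p]); (a : ℚ_[p]) * ((Δ : ℚ_[p]) * N) + c, 0] := by
      rw [phi_mk]
      ext i j
      fin_cases i <;> fin_cases j <;> (try simp) <;> (try field_simp) <;>
        first
        | linear_combination hptQ
        | linear_combination -hptQ
        | ring
    rw [hg1, hg2, hg3, hg4]
    apply span_matrices p (c : ℚ_[p]) half d t
        ((a : ℚ_[p]) * ((Δ : ℚ_[p]) * N) + c) hhalfQ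
        (by linear_combination hdcQ)
        (by linear_combination -hptQ)
        ⟨-(half * c), by push_cast; rw [hhalfQ]; ring⟩
        ⟨half * (p : ℤ_[p]) * c, by push_cast; rw [hhalfQ]; ring⟩
        ⟨half * c, by push_cast; rw [hhalfQ]; ring⟩
        ⟨half * (p : ℤ_[p]), by push_cast; rw [hhalfQ]; ring⟩
        ⟨(a : ℤ_[p]) * ((Δ : ℤ_[p]) * N) + c, by push_cast; ring⟩
end

section
/- Let Δ, N be positive integers, p an odd prime with p ∤ ΔN, a ∈ ℤ with p ∣ a²ΔN + 1, and c ∈ ℤ_p with c² = −ΔN and a·c + 1 ∈ p·ℤ_p. Let c₄ ∈ ℤ satisfy c₄ − c ∈ p·ℤ_p, and let A, B ∈ ℤ satisfy A·p + 2B·(aΔN + c₄) = 1. Then the ℤ-submodule of ℍ[ℚ,−ΔN,p] spanned by f₁ = e₁, f₂ = −c₄·e₂ + e₃, f₃ = −2(aΔN + c₄)·e₂ + p·e₄, f₄ = p·(A·e₂ + B·e₄) equals the set of h ∈ R(N) such that the lower-left entry of φ(h), h viewed in ℍ[ℚ_p,−ΔN,p], lies in p·ℤ_p; this subgroup is the Eichler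 order R(Np) of level Np inside R(N). -/
open Quaternion

/-- The coefficient-wise inclusion `ℍ[ℚ, -ΔN, p] → ℍ[ℚ_p, -ΔN, p]`. -/
noncomputable def toLoc (p : ℕ) [Fact p.Prime] (Δ N : ℕ) :
    ℍ[ℚ, -((Δ : ℚ) * N), (p : ℚ)] → ℍ[ℚ_[p], -((Δ : ℚ_[p]) * N), (p : ℚ_[p])] := fun h =>
  ⟨(h.re : ℚ_[p]), (h.imI : ℚ_[p]), (h.imJ : ℚ_[p]), (h.imK : ℚ_[p])⟩

/-- Hashimoto's Eichler order `R(N)` of level `N` in `ℍ[ℚ, -ΔN, p]`. -/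
def RN (Δ N p : ℕ) (a : ℤ) : Submodule ℤ ℍ[ℚ, -((Δ : ℚ) * N), (p : ℚ)] :=
  Submodule.span ℤ
    {(1 : ℍ[ℚ, -((Δ : ℚ) * N), (p : ℚ)]), ⟨1/2, 0, 1/2, 0⟩, ⟨0, 1/2, 0, 1/2⟩,
      ⟨0, 0, (a : ℚ) * Δ * N / p, 1 / (p : ℚ)⟩}

/-- The `ℤ`-linear "lower-left entry of `φ`" map. -/
noncomputable def ell (p : ℕ) [Fact p.Prime] (Δ N : ℕ) (c : ℤ_[p]) :
    ℍ[ℚ, -((Δ : ℚ) * N), (p : ℚ)] →ₗ[ℤ] ℚ_[p] where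
  toFun h := (h.imJ : ℚ_[p]) * p + (h.imK : ℚ_[p]) * p * c
  map_add' x y := by
    simp only [QuaternionAlgebra.imJ_add, QuaternionAlgebra.imK_add]
    push_cast
    ring
  map_smul' z x := by
    simp only [QuaternionAlgebra.imJ_smul, QuaternionAlgebra.imK_smul]
    simp only [zsmul_eq_mul, RingHom.id_apply]
    push_cast
    ring

@[simp] theorem ell_apply (p : ℕ) [Fact p.Prime] (Δ N : ℕ) (c : ℤ_[p])
    (h : ℍ[ℚ, -((Δ : ℚ) * N), (p : ℚ)]) :
    ell p Δ N c h = (h.imJ : ℚ_[p]) * p + (h.imK : ℚ_[p]) * p * c := rfl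

/-- The `ℤ`-submodule `pℤ_p` of `ℚ_p`. -/
def pS (p : ℕ) [Fact p.Prime] : Submodule ℤ ℚ_[p] where
  carrier := {x | ∃ z : ℤ_[p], x = (p : ℚ_[p]) * z}
  add_mem' := by
    rintro x y ⟨u, rfl⟩ ⟨v, rfl⟩
    exact ⟨u + v, by push_cast; ring⟩
  zero_mem' := ⟨0, by simp⟩
  smul_mem' := by
    rintro n x ⟨u, rfl⟩
    refine ⟨n • u, ?_⟩
    simp only [zsmul_eq_mul]
    push_cast
    ring

theorem mem_pS (p : ℕ) [Fact p.Prime] (x : ℚ_[p]) :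
    x ∈ pS p ↔ ∃ z : ℤ_[p], x = (p : ℚ_[p]) * z := Iff.rfl

set_option maxHeartbeats 2000000 in
/-- `f₁ = e₁`, `f₂ = −c₄e₂ + e₃`, `f₃ = −2(aΔN + c₄)e₂ + pe₄`, `f₄ = p(Ae₂ + Be₄)` is a
basis of the Eichler order `R(Np)` inside `R(N)`. -/
theorem stmt_12 (Δ N : ℕ) (hΔ : 0 < Δ) (hN : 0 < N)
    (p : ℕ) [Fact p.Prime] (hp2 : p ≠ 2) (hpΔN : ¬ p ∣ Δ * N)
    (a : ℤ) (ha : (p : ℤ) ∣ a ^ 2 * Δ * N + 1)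
    (c : ℤ_[p]) (hc : c ^ 2 = -((Δ : ℤ_[p]) * N)) (hac : (p : ℤ_[p]) ∣ (a : ℤ_[p]) * c + 1)
    (c₄ : ℤ) (hc₄ : (p : ℤ_[p]) ∣ ((c₄ : ℤ_[p]) - c))
    (A B : ℤ) (hAB : A * p + 2 * B * (a * Δ * N + c₄) = 1) :
    (Submodule.span ℤ
        {(1 : ℍ[ℚ, -((Δ : ℚ) * N), (p : ℚ)]),
         (-c₄) • (⟨1/2, 0, 1/2, 0⟩ : ℍ[ℚ, -((Δ : ℚ) * N), (p : ℚ)]) + ⟨0, 1/2, 0, 1/2⟩,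
         (-(2 * (a * Δ * N + c₄))) • (⟨1/2, 0, 1/2, 0⟩ : ℍ[ℚ, -((Δ : ℚ) * N), (p : ℚ)]) +
           (p : ℤ) • (⟨0, 0, (a : ℚ) * Δ * N / p, 1 / (p : ℚ)⟩ : ℍ[ℚ, -((Δ : ℚ) * N), (p : ℚ)]),
         (p : ℤ) • (A • (⟨1/2, 0, 1/2, 0⟩ : ℍ[ℚ, -((Δ : ℚ) * N), (p : ℚ)]) +
           B • (⟨0, 0, (a : ℚ) * Δ * N / p, 1 / (p : ℚ)⟩ : ℍ[ℚ, -((Δ : ℚ) * N), (p : ℚ)]))} :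
      Set ℍ[ℚ, -((Δ : ℚ) * N), (p : ℚ)]) =
      {h | h ∈ RN Δ N p a ∧
        ∃ z : ℤ_[p], phi p Δ N c (toLoc p Δ N h) 1 0 = (p : ℚ_[p]) * (z : ℚ_[p])} := by
  have hp : p.Prime := Fact.out
  have hpQ : (p : ℚ) ≠ 0 := Nat.cast_ne_zero.mpr hp.ne_zero
  have hpP : (p : ℚ_[p]) ≠ 0 := Nat.cast_ne_zero.mpr hp.ne_zero
  -- 2 is a unit in ℤ_p
  have h2 : IsUnit (2 : ℤ_[p]) := by
    rw [PadicInt.isUnit_iff]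
    refine le_antisymm (PadicInt.norm_le_one _) ?_
    by_contra hlt
    push_neg at hlt
    have h22 : ((2 : ℤ) : ℤ_[p]) = (2 : ℤ_[p]) := by push_cast; ring
    rw [← h22, PadicInt.norm_int_lt_one_iff_dvd] at hlt
    have : p ∣ 2 := by exact_mod_cast hlt
    exact hp2 ((Nat.prime_dvd_prime_iff_eq hp Nat.prime_two).mp this)
  obtain ⟨half, hhalf⟩ := isUnit_iff_exists_inv.mp h2
  have hhQ : (2 : ℚ_[p]) * (half : ℚ_[p]) = 1 := by
    have := congrArg (fun t : ℤ_[p] => (t : ℚ_[p])) hhalf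
    push_cast at this
    exact this
  -- rewrite the right-hand side as a submodule
  have hentry : ∀ h, phi p Δ N c (toLoc p Δ N h) 1 0 = ell p Δ N c h := by
    intro h
    simp [phi, toLoc]
  have hset : {h | h ∈ RN Δ N p a ∧
        ∃ z : ℤ_[p], phi p Δ N c (toLoc p Δ N h) 1 0 = (p : ℚ_[p]) * (z : ℚ_[p])}
      = ↑(RN Δ N p a ⊓ Submodule.comap (ell p Δ N c) (pS p)) := by
    ext h
    simp only [Set.mem_setOf_eq, SetLike.mem_coe, Submodule.mem_inf, Submodule.mem_comap,
      hentry, mem_pS]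
  rw [hset]
  refine congrArg _ (le_antisymm (Submodule.span_le.mpr ?_) ?_)
  · -- forward inclusion
    intro x hx
    simp only [Set.mem_insert_iff, Set.mem_singleton_iff] at hx
    have hg1 : (1 : ℍ[ℚ, -((Δ : ℚ) * N), (p : ℚ)]) ∈ RN Δ N p a :=
      Submodule.subset_span (by simp)
    have hg2 : (⟨1/2, 0, 1/2, 0⟩ : ℍ[ℚ, -((Δ : ℚ) * N), (p : ℚ)]) ∈ RN Δ N p a :=
      Submodule.subset_span (by simp)
    have hg3 : (⟨0, 1/2, 0, 1/2⟩ : ℍ[ℚ, -((Δ : ℚ) * N), (p : ℚ)]) ∈ RN Δ N p a :=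
      Submodule.subset_span (by simp)
    have hg4 : (⟨0, 0, (a : ℚ) * Δ * N / p, 1 / (p : ℚ)⟩ : ℍ[ℚ, -((Δ : ℚ) * N), (p : ℚ)])
        ∈ RN Δ N p a := Submodule.subset_span (by simp)
    rcases hx with rfl | rfl | rfl | rfl
    · refine Submodule.mem_inf.mpr ⟨hg1, ⟨0, ?_⟩⟩
      simp
    · refine Submodule.mem_inf.mpr ⟨Submodule.add_mem _ (Submodule.smul_mem _ _ hg2) hg3,
        ⟨(c - (c₄ : ℤ_[p])) * half, ?_⟩⟩
      simp only [Submodule.mem_comap, mem_pS, ell_apply, QuaternionAlgebra.imJ_add,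
        QuaternionAlgebra.imK_add, QuaternionAlgebra.imJ_smul, QuaternionAlgebra.imK_smul]
      simp only [zsmul_eq_mul]
      push_cast
      linear_combination (-(p * ((c : ℚ_[p]) - (c₄ : ℚ_[p])) / 2)) * hhQ
    · refine Submodule.mem_inf.mpr ⟨Submodule.add_mem _ (Submodule.smul_mem _ _ hg2)
        (Submodule.smul_mem _ _ hg4), ⟨c - (c₄ : ℤ_[p]), ?_⟩⟩
      simp only [Submodule.mem_comap, mem_pS, ell_apply, QuaternionAlgebra.imJ_add,
        QuaternionAlgebra.imK_add, QuaternionAlgebra.imJ_smul, QuaternionAlgebra.imK_smul]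
      simp only [zsmul_eq_mul]
      push_cast
      field_simp
      ring
    · refine Submodule.mem_inf.mpr ⟨Submodule.smul_mem _ _ (Submodule.add_mem _
        (Submodule.smul_mem _ _ hg2) (Submodule.smul_mem _ _ hg4)),
        ⟨(p : ℤ_[p]) * A * half + B * ((a : ℤ_[p]) * Δ * N) + B * c, ?_⟩⟩
      simp only [Submodule.mem_comap, mem_pS, ell_apply, QuaternionAlgebra.imJ_add,
        QuaternionAlgebra.imK_add, QuaternionAlgebra.imJ_smul, QuaternionAlgebra.imK_smul]
      simp only [zsmul_eq_mul]
      push_cast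
      linear_combination (norm := (field_simp; ring)) (-((p : ℚ_[p]) ^ 2 * (A : ℚ_[p]) / 2)) * hhQ
  · -- reverse inclusion
    intro x hx
    obtain ⟨hxRN, hxS⟩ := Submodule.mem_inf.mp hx
    rw [RN, Submodule.mem_span_insert] at hxRN
    obtain ⟨x₁, y, hy, rfl⟩ := hxRN
    rw [Submodule.mem_span_insert] at hy
    obtain ⟨x₂, y2, hy2, rfl⟩ := hy
    rw [Submodule.mem_span_insert] at hy2
    obtain ⟨x₃, y3, hy3, rfl⟩ := hy2
    rw [Submodule.mem_span_singleton] at hy3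
    obtain ⟨x₄, rfl⟩ := hy3
    obtain ⟨z, hz⟩ := hxS
    simp only [Submodule.mem_comap, mem_pS, ell_apply, QuaternionAlgebra.imJ_add,
      QuaternionAlgebra.imK_add, QuaternionAlgebra.imJ_smul, QuaternionAlgebra.imK_smul,
      QuaternionAlgebra.imJ_one, QuaternionAlgebra.imK_one] at hz
    simp only [zsmul_eq_mul] at hz
    push_cast at hz
    field_simp at hz
    -- key divisibility
    have hdvd2 : (p : ℤ_[p]) ∣ 2 * ((x₄ : ℤ_[p]) * ((a : ℤ_[p]) * Δ * N + c)) := by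
      refine ⟨2 * z - x₂ - x₃ * c, ?_⟩
      apply Subtype.coe_injective
      have h2c : ((2 : ℤ_[p]) : ℚ_[p]) = 2 := rfl
      push_cast [h2c]
      linear_combination hz
    have hdvd : (p : ℤ_[p]) ∣ (x₄ : ℤ_[p]) * ((a : ℤ_[p]) * Δ * N + c) := by
      rcases (PadicInt.prime_p).2.2 _ _ hdvd2 with h | h
      · exact absurd h (by
          rw [← PadicInt.norm_lt_one_iff_dvd, PadicInt.isUnit_iff.mp h2]
          exact lt_irrefl 1)
      · exact h
    have hdvd4 : (p : ℤ_[p]) ∣ (x₄ : ℤ_[p]) * ((a : ℤ_[p]) * Δ * N + c₄) := by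
      have : (x₄ : ℤ_[p]) * ((a : ℤ_[p]) * Δ * N + c₄)
          = (x₄ : ℤ_[p]) * ((a : ℤ_[p]) * Δ * N + c) + x₄ * ((c₄ : ℤ_[p]) - c) := by ring
      rw [this]
      exact dvd_add hdvd (Dvd.dvd.mul_left hc₄ _)
    have key : (p : ℤ) ∣ x₄ * (a * Δ * N + c₄) := by
      rw [← PadicInt.norm_int_lt_one_iff_dvd, PadicInt.norm_lt_one_iff_dvd]
      push_cast
      exact hdvd4
    obtain ⟨k, hk⟩ := key
    have hkQ : (x₄ : ℚ) * ((a : ℚ) * Δ * N + c₄) = p * k := by exact_mod_cast hk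
    have hABQ : (A : ℚ) * p + 2 * B * ((a : ℚ) * Δ * N + c₄) = 1 := by exact_mod_cast hAB
    -- express x as a combination of the f's
    have hxeq : x₁ • (1 : ℍ[ℚ, -((Δ : ℚ) * N), (p : ℚ)]) +
        (x₂ • (⟨1/2, 0, 1/2, 0⟩ : ℍ[ℚ, -((Δ : ℚ) * N), (p : ℚ)]) +
          (x₃ • (⟨0, 1/2, 0, 1/2⟩ : ℍ[ℚ, -((Δ : ℚ) * N), (p : ℚ)]) +
            x₄ • (⟨0, 0, (a : ℚ) * Δ * N / p, 1 / (p : ℚ)⟩ : ℍ[ℚ, -((Δ : ℚ) * N), (p : ℚ)])))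
        = x₁ • (1 : ℍ[ℚ, -((Δ : ℚ) * N), (p : ℚ)]) +
          x₃ • ((-c₄) • (⟨1/2, 0, 1/2, 0⟩ : ℍ[ℚ, -((Δ : ℚ) * N), (p : ℚ)]) + ⟨0, 1/2, 0, 1/2⟩) +
          (A * x₄ - (x₂ + c₄ * x₃) * B) •
            ((-(2 * (a * Δ * N + c₄))) • (⟨1/2, 0, 1/2, 0⟩ : ℍ[ℚ, -((Δ : ℚ) * N), (p : ℚ)]) +
              (p : ℤ) • (⟨0, 0, (a : ℚ) * Δ * N / p, 1 / (p : ℚ)⟩ :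
                ℍ[ℚ, -((Δ : ℚ) * N), (p : ℚ)])) +
          (2 * k + (x₂ + c₄ * x₃)) •
            ((p : ℤ) • (A • (⟨1/2, 0, 1/2, 0⟩ : ℍ[ℚ, -((Δ : ℚ) * N), (p : ℚ)]) +
              B • (⟨0, 0, (a : ℚ) * Δ * N / p, 1 / (p : ℚ)⟩ :
                ℍ[ℚ, -((Δ : ℚ) * N), (p : ℚ)]))) := by
      apply QuaternionAlgebra.ext <;>
        simp only [QuaternionAlgebra.re_add, QuaternionAlgebra.imI_add,
          QuaternionAlgebra.imJ_add, QuaternionAlgebra.imK_add, QuaternionAlgebra.re_smul,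
          QuaternionAlgebra.imI_smul, QuaternionAlgebra.imJ_smul, QuaternionAlgebra.imK_smul,
          QuaternionAlgebra.re_one, QuaternionAlgebra.imI_one, QuaternionAlgebra.imJ_one,
          QuaternionAlgebra.imK_one] <;>
        simp only [zsmul_eq_mul] <;>
        push_cast
      · linear_combination (A : ℚ) * hkQ + (-(((x₂ : ℚ) + c₄ * x₃) / 2)) * hABQ
      · ring
      · linear_combination (norm := (field_simp; ring))
          ((A : ℚ) + 2 * B * ((a : ℚ) * Δ * N) / p) * hkQ +
          (-(((x₂ : ℚ) + c₄ * x₃) / 2 + (x₄ : ℚ) * ((a : ℚ) * Δ * N) / p)) * hABQ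
      · linear_combination (norm := (field_simp; ring))
          (2 * (B : ℚ) / p) * hkQ + (-((x₄ : ℚ) / p)) * hABQ
    rw [hxeq]
    refine Submodule.add_mem _ (Submodule.add_mem _ (Submodule.add_mem _
      (Submodule.smul_mem _ _ (Submodule.subset_span (by simp)))
      (Submodule.smul_mem _ _ (Submodule.subset_span (by simp))))
      (Submodule.smul_mem _ _ (Submodule.subset_span (by simp))))
      (Submodule.smul_mem _ _ (Submodule.subset_span (by simp)))
end
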